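/- A map f : ℂ → ℂ is continuous and limit periodic with respect to x if and only if there exists a sequence (f_n)_{n≥1} of continuous maps ℂ → ℂ with f_n(z + 2πn) = f_n(z) for all z, such that (f_n) converges to f uniformly on every horizontal band {z ∈ ℂ : Im(z) ∈ K} (K ⊂ ℝ compact) along the divisibility net; moreover, the sequence (f_n) can be chosen to be equicontinuous. -/

import Mathlib

open Complex Real Filter MeasureTheory

noncomputable section

/-- The profinite completion of `ℤ`: the inverse limit of the groups `ZMod n`
over the divisibility order. -/
def Zhat : Type :=
  {a : (n : ℕ+) → ZMod n //
    ∀ (n k : ℕ+), ZMod.castHom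
        (show ((n : ℕ+) : ℕ) ∣ ((n * k : ℕ+) : ℕ) by
          rw [PNat.mul_coe]; exact dvd_mul_right _ _)
        (ZMod n) (a (n * k)) = a n}

instance (n : ℕ) : TopologicalSpace (ZMod n) := ⊥

instance : TopologicalSpace Zhat := by unfold Zhat; infer_instance

instance : MeasurableSpace Zhat := borel _

instance : Zero Zhat := ⟨⟨fun _ => 0, fun _ _ => map_zero _⟩⟩

instance : Add Zhat :=
  ⟨fun a b => ⟨fun n => a.1 n + b.1 n, fun n k => by rw [map_add, a.2 n k, b.2 n k]⟩⟩

/-- The canonical inclusion `ℤ → ẑ`. -/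
def iotaZ (k : ℤ) : Zhat := ⟨fun n => (k : ZMod n), fun n m => by rw [map_intCast]⟩

/-- Multiplication by a natural number on `ẑ`. -/
def nsmulZ (c : ℕ) (a : Zhat) : Zhat :=
  ⟨fun n => (c : ZMod n) * a.1 n, fun n k => by rw [map_mul, map_natCast, a.2 n k]⟩

lemma exp_real_mul_I_norm (θ : ℝ) : ‖Complex.exp ((θ : ℂ) * Complex.I)‖ = 1 := by
  exact Complex.norm_exp_ofReal_mul_I θ

lemma exp_div_pow (θ : ℝ) (n k : ℕ+) :
    Complex.exp (((θ / (((n * k : ℕ+) : ℕ)) : ℝ) : ℂ) * Complex.I) ^ ((k : ℕ+) : ℕ)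
      = Complex.exp (((θ / ((n : ℕ+) : ℕ) : ℝ) : ℂ) * Complex.I) := by
  rw [← Complex.exp_nat_mul]
  congr 1
  have hn : (((n : ℕ+) : ℕ) : ℂ) ≠ 0 := by exact_mod_cast n.ne_zero
  have hk : (((k : ℕ+) : ℕ) : ℂ) ≠ 0 := by exact_mod_cast k.ne_zero
  rw [PNat.mul_coe]
  push_cast
  field_simp

lemma exp_div_powC (w : ℂ) (n k : ℕ+) :
    Complex.exp (w / (((n * k : ℕ+) : ℕ) : ℂ)) ^ ((k : ℕ+) : ℕ)
      = Complex.exp (w / (((n : ℕ+) : ℕ) : ℂ)) := by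
  rw [← Complex.exp_nat_mul]
  congr 1
  have hn : (((n : ℕ+) : ℕ) : ℂ) ≠ 0 := by exact_mod_cast n.ne_zero
  have hk : (((k : ℕ+) : ℕ) : ℂ) ≠ 0 := by exact_mod_cast k.ne_zero
  rw [PNat.mul_coe]
  push_cast
  field_simp

lemma exp_natCast_congr (n : ℕ+) (A B : ℕ)
    (h : (A : ZMod ((n : ℕ+) : ℕ)) = (B : ZMod ((n : ℕ+) : ℕ))) :
    Complex.exp (((2 * π * A / ((n : ℕ+) : ℕ) : ℝ) : ℂ) * Complex.I)
      = Complex.exp (((2 * π * B / ((n : ℕ+) : ℕ) : ℝ) : ℂ) * Complex.I) := by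
  rw [ZMod.natCast_eq_natCast_iff] at h
  obtain ⟨j, hj⟩ := Nat.modEq_iff_dvd.mp h
  have hn : ((((n : ℕ+) : ℕ) : ℝ)) ≠ 0 := by exact_mod_cast n.ne_zero
  have hB : (B : ℝ) = (A : ℝ) + (((n : ℕ+) : ℕ) : ℝ) * (j : ℝ) := by
    have : (B : ℤ) = (A : ℤ) + (((n : ℕ+) : ℕ) : ℤ) * j := by linarith [hj]
    exact_mod_cast congrArg (fun t : ℤ => (t : ℝ)) this
  have key : ((2 * π * B / ((n : ℕ+) : ℕ) : ℝ) : ℂ) * Complex.I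
      = ((2 * π * A / ((n : ℕ+) : ℕ) : ℝ) : ℂ) * Complex.I + (j : ℂ) * (2 * (π : ℂ) * Complex.I) := by
    have hnC : ((((n : ℕ+) : ℕ) : ℂ)) ≠ 0 := by exact_mod_cast n.ne_zero
    push_cast [hB]
    field_simp
  rw [key, Complex.exp_add, Complex.exp_int_mul_two_pi_mul_I, mul_one]

/-- The component at level `n` of the canonical map `ẑ → S¹_ℚ`,
`l ↦ e^{2πil/n}`. -/
def phiComp (a : Zhat) (n : ℕ+) : ℂ :=
  Complex.exp (((2 * π * ((a.1 n).val : ℕ) / ((n : ℕ+) : ℕ) : ℝ) : ℂ) * Complex.I)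

lemma phiComp_pow (a : Zhat) (n k : ℕ+) : phiComp a (n * k) ^ ((k : ℕ+) : ℕ) = phiComp a n := by
  unfold phiComp
  rw [exp_div_pow]
  haveI : NeZero (((n * k : ℕ+) : ℕ)) := ⟨(n * k).ne_zero⟩
  haveI : NeZero (((n : ℕ+) : ℕ)) := ⟨n.ne_zero⟩
  apply exp_natCast_congr
  have h := a.2 n k
  rw [ZMod.castHom_apply] at h
  rw [ZMod.natCast_val, ZMod.natCast_val, ZMod.cast_id, h]

/-- The adelic solenoid `S¹_ℚ`: the inverse limit of the circles
`S¹ = {z ∈ ℂ : ‖z‖ = 1}` under the covering maps `z ↦ z^{m/n}` for `n ∣ m`. -/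
def SolQ : Type :=
  {z : ℕ+ → ℂ // (∀ n, ‖z n‖ = 1) ∧ ∀ (n k : ℕ+), z (n * k) ^ ((k : ℕ+) : ℕ) = z n}

instance : TopologicalSpace SolQ := by unfold SolQ; infer_instance
instance : MeasurableSpace SolQ := borel _

instance : Mul SolQ :=
  ⟨fun x y => ⟨fun n => x.1 n * y.1 n,
    ⟨fun n => by rw [norm_mul, x.2.1 n, y.2.1 n, one_mul],
     fun n k => by rw [mul_pow, x.2.2 n k, y.2.2 n k]⟩⟩⟩

instance : One SolQ := ⟨⟨fun _ => 1, ⟨fun _ => norm_one, fun _ _ => one_pow _⟩⟩⟩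

/-- The canonical homomorphism `φ : ẑ → S¹_ℚ`, induced componentwise by
`l ↦ e^{2πil/n}`. -/
def phiS (a : Zhat) : SolQ :=
  ⟨fun n => phiComp a n, ⟨fun n => exp_real_mul_I_norm _, phiComp_pow a⟩⟩

/-- The baseleaf `ν : ℝ → S¹_ℚ`, `ν(t) = (e^{it/n})ₙ`. -/
def nuS (t : ℝ) : SolQ :=
  ⟨fun n => Complex.exp (((t / ((n : ℕ+) : ℕ) : ℝ) : ℂ) * Complex.I),
   ⟨fun n => exp_real_mul_I_norm _, fun n k => exp_div_pow t n k⟩⟩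

/-- `exp : ẑ × ℝ → S¹_ℚ`, `exp(a, θ) = φ(a)·ν(θ)`. -/
def expS (p : Zhat × ℝ) : SolQ := phiS p.1 * nuS p.2

/-- The algebraic solenoid `ℂ*_ℚ`: the inverse limit of copies of `ℂ* = ℂ \ {0}`
under the covering maps `z ↦ z^{m/n}` for `n ∣ m`. -/
def CSolQ : Type :=
  {z : ℕ+ → ℂ // (∀ n, z n ≠ 0) ∧ ∀ (n k : ℕ+), z (n * k) ^ ((k : ℕ+) : ℕ) = z n}

instance : TopologicalSpace CSolQ := by unfold CSolQ; infer_instance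
instance : MeasurableSpace CSolQ := borel _

instance : Mul CSolQ :=
  ⟨fun x y => ⟨fun n => x.1 n * y.1 n,
    ⟨fun n => mul_ne_zero (x.2.1 n) (y.2.1 n),
     fun n k => by rw [mul_pow, x.2.2 n k, y.2.2 n k]⟩⟩⟩

instance : One CSolQ := ⟨⟨fun _ => 1, ⟨fun _ => one_ne_zero, fun _ _ => one_pow _⟩⟩⟩

/-- The canonical homomorphism `φ : ẑ → ℂ*_ℚ`. -/
def phiC (a : Zhat) : CSolQ :=
  ⟨fun n => phiComp a n, ⟨fun n => Complex.exp_ne_zero _, phiComp_pow a⟩⟩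

/-- The baseleaf `ν : ℂ → ℂ*_ℚ`, `ν(z) = (e^{iz/n})ₙ`. -/
def nuC (z : ℂ) : CSolQ :=
  ⟨fun n => Complex.exp (Complex.I * z / (((n : ℕ+) : ℕ) : ℂ)),
   ⟨fun n => Complex.exp_ne_zero _, fun n k => exp_div_powC (Complex.I * z) n k⟩⟩

/-- `exp : ẑ × ℂ → ℂ*_ℚ`, `exp(a, z) = φ(a)·ν(z)`. -/
def expC (a : Zhat) (z : ℂ) : CSolQ := phiC a * nuC z

/-- The `n`-th power map on the Riemann sphere `Ĉ = ℂ ∪ {∞}`, with `∞ ↦ ∞`. -/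
def spherePow (k : ℕ) (x : OnePoint ℂ) : OnePoint ℂ :=
  Option.map (fun z : ℂ => z ^ k) x

/-- The adelic Riemann sphere `Ĉ_ℚ`: the inverse limit of Riemann spheres under
the branched covering maps `z ↦ z^{m/n}` for `n ∣ m`. -/
def SphereQ : Type :=
  {z : ℕ+ → OnePoint ℂ // ∀ (n k : ℕ+), spherePow ((k : ℕ+) : ℕ) (z (n * k)) = z n}

instance : TopologicalSpace SphereQ := by unfold SphereQ; infer_instance

/-- The leaf maps `exp(a, ·) : ℂ → ℂ*_ℚ ⊂ Ĉ_ℚ` of the adelic Riemann sphere. -/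
def expSph (a : Zhat) (z : ℂ) : SphereQ :=
  ⟨fun n => OnePoint.some (phiComp a n * Complex.exp (Complex.I * z / (((n : ℕ+) : ℕ) : ℂ))),
   fun n k => by
     show OnePoint.some ((phiComp a (n * k) * _) ^ ((k : ℕ+) : ℕ)) = _
     rw [mul_pow, phiComp_pow, exp_div_powC]⟩

/-- The renormalization operator `I_n` on functions on `ℂ*_ℚ`:
the average of `μ` over the fiber `π_n⁻¹(π_n(x))`, namely
`I_n(μ)(x) = ∫_{ẑ} μ(φ(n·a)·x) dη(a)`. -/
def Iren (η : Measure Zhat) (n : ℕ+) (f : CSolQ → ℂ) (x : CSolQ) : ℂ :=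
  ∫ a : Zhat, f (phiC (nsmulZ ((n : ℕ+) : ℕ) a) * x) ∂η

/-- The renormalization operator `I_n` on functions on `S¹_ℚ`. -/
def IrenS (η : Measure Zhat) (n : ℕ+) (f : SolQ → ℂ) (x : SolQ) : ℂ :=
  ∫ a : Zhat, f (phiS (nsmulZ ((n : ℕ+) : ℕ) a) * x) ∂η

/-- The character `χ_q = (π_n)^m : S¹_ℚ → S¹` associated to a rational `q = m/n`. -/
def chiQ (q : ℚ) (x : SolQ) : ℂ := (x.1 ⟨q.den, q.den_pos⟩) ^ q.num

/-- A function `f : ℝ → ℂ` is limit periodic if for every `ε > 0` there is a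
positive integer `N` such that `|f(x + 2πn) − f(x)| < ε` for all `x ∈ ℝ` and
all integers `n ∈ Nℤ`. -/
def LimitPeriodic (f : ℝ → ℂ) : Prop :=
  ∀ ε : ℝ, 0 < ε → ∃ N : ℕ+, ∀ x : ℝ, ∀ n : ℤ, ((N : ℕ+) : ℤ) ∣ n →
    ‖f (x + 2 * π * n) - f x‖ < ε

/-- A function `f : ℂ → ℂ` is limit periodic with respect to `x` if for every
`ε > 0` and compact `K ⊆ ℝ` there is a positive integer `N` with
`|f(z + 2πn) − f(z)| < ε` for all `z` with `Im z ∈ K` and all `n ∈ Nℤ`. -/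
def LimitPeriodicX (f : ℂ → ℂ) : Prop :=
  ∀ ε : ℝ, 0 < ε → ∀ K : Set ℝ, IsCompact K → ∃ N : ℕ+,
    ∀ z : ℂ, z.im ∈ K → ∀ n : ℤ, ((N : ℕ+) : ℤ) ∣ n →
      ‖f (z + 2 * π * n) - f z‖ < ε


/-- Uniform convergence on horizontal bands along the divisibility net. -/
def ConvBands (F : ℕ+ → ℂ → ℂ) (f : ℂ → ℂ) : Prop :=
  ∀ K : Set ℝ, IsCompact K → ∀ ε : ℝ, 0 < ε → ∃ N : ℕ+,
    ∀ n : ℕ+, ((N : ℕ+) : ℕ) ∣ ((n : ℕ+) : ℕ) →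
      ∀ z : ℂ, z.im ∈ K → ‖f z - F n z‖ < ε

/-!
For a period `P = 2πn`, glue the horizontal translates `z ↦ f (z - cP)`, `c ∈ ℤ`, with the
partition of unity `c ↦ tent (Re z / P - c)` of piecewise linear tents. The result is
`P`-periodic, and once `N ∣ n` every translate is `ε`-close to `f` on a band, hence so is the
convex combination. For equicontinuity, limit periodicity reduces a band to a compact
fundamental rectangle, so `f` is bounded and uniformly continuous on bands; the tents have slope
`1 / P ≤ 1`, uniformly in `n`. Conversely, a uniform limit on bands of continuous maps is
continuous, and `F_N` being `2πN`-periodic and `ε`-close to `f` makes `f` almost `2πN`-periodic.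
-/

open Set Topology

section TentPeriodization

variable {E : Type*} [NormedAddCommGroup E] [NormedSpace ℝ E]

def tent (s : ℝ) : ℝ := max 0 (1 - |s|)

lemma tent_nonneg (s : ℝ) : 0 ≤ tent s := le_max_left _ _

lemma abs_tent_sub_tent_le (s t : ℝ) : |tent s - tent t| ≤ |s - t| := by
  rw [tent, tent, max_comm 0, max_comm 0]
  refine (abs_max_sub_max_le_abs _ _ _).trans ?_
  rw [sub_sub_sub_cancel_left, abs_sub_comm]
  exact abs_abs_sub_abs_le_abs_sub s t

lemma tent_sub_intCast_eq_zero {u : ℝ} {c : ℤ} (hc : c ∉ ({⌊u⌋, ⌊u⌋ + 1} : Finset ℤ)) :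
    tent (u - c) = 0 := by
  simp only [Finset.mem_insert, Finset.mem_singleton, not_or] at hc
  have : 1 ≤ |u - c| := by
    rcases lt_or_gt_of_ne hc.1 with h | h
    · have : (c : ℝ) + 1 ≤ ⌊u⌋ := by exact_mod_cast h
      rw [abs_of_nonneg] <;> linarith [Int.floor_le u]
    · have : (⌊u⌋ : ℝ) + 2 ≤ c := by exact_mod_cast (show ⌊u⌋ + 2 ≤ c by omega)
      rw [abs_of_nonpos] <;> linarith [Int.lt_floor_add_one u]
  exact max_eq_left (by linarith)

lemma sum_tent_sub_intCast {u : ℝ} {S : Finset ℤ} (hS : {⌊u⌋, ⌊u⌋ + 1} ⊆ S) :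
    ∑ c ∈ S, tent (u - c) = 1 := by
  rw [← Finset.sum_subset hS fun c _ hc => tent_sub_intCast_eq_zero hc,
    Finset.sum_pair (by omega)]
  have h₀ := Int.floor_le u
  have h₁ := Int.lt_floor_add_one u
  simp only [tent, Int.cast_add, Int.cast_one]
  rw [abs_of_nonneg (by linarith), abs_of_neg (by linarith), max_eq_right (by linarith),
    max_eq_right (by linarith)]
  ring

lemma norm_sum_smul_le {ι : Type*} {S : Finset ι} {w : ι → ℝ} {g : ι → E} {B : ℝ}
    (hw : ∀ i ∈ S, 0 ≤ w i) (hg : ∀ i ∈ S, ‖g i‖ ≤ B) :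
    ‖∑ i ∈ S, w i • g i‖ ≤ (∑ i ∈ S, w i) * B := by
  rw [Finset.sum_mul]
  refine (norm_sum_le _ _).trans (Finset.sum_le_sum fun i hi => ?_)
  rw [norm_smul, Real.norm_of_nonneg (hw i hi)]
  exact mul_le_mul_of_nonneg_left (hg i hi) (hw i hi)

def tentPeriodization (f : ℂ → E) (P : ℝ) (z : ℂ) : E :=
  ∑ᶠ c : ℤ, tent (z.re / P - c) • f (z - c * P)

variable {f : ℂ → E} {P : ℝ}

lemma tentPeriodization_eq_sum {z : ℂ} {S : Finset ℤ}
    (hS : {⌊z.re / P⌋, ⌊z.re / P⌋ + 1} ⊆ S) :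
    tentPeriodization f P z = ∑ c ∈ S, tent (z.re / P - c) • f (z - c * P) := by
  refine finsum_eq_finsetSum_of_support_subset _ fun c hc => hS ?_
  by_contra h
  exact hc (by simp only [tent_sub_intCast_eq_zero h, zero_smul])

lemma tentPeriodization_add_period (hP : P ≠ 0) (z : ℂ) :
    tentPeriodization f P (z + P) = tentPeriodization f P z := by
  have hre : (z + P).re / P = z.re / P + 1 := by simp [add_div, hP]
  rw [tentPeriodization, tentPeriodization, hre]
  conv_rhs => rw [← finsum_comp_equiv (Equiv.subRight (1 : ℤ))]
  refine finsum_congr fun c => ?_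
  simp only [Equiv.subRight_apply, Int.cast_sub, Int.cast_one]
  congr 2 <;> ring

lemma norm_tentPeriodization_sub_le {z : ℂ} {ε : ℝ}
    (hf : ∀ c : ℤ, ‖f (z - c * P) - f z‖ ≤ ε) :
    ‖tentPeriodization f P z - f z‖ ≤ ε := by
  have hS := subset_refl ({⌊z.re / P⌋, ⌊z.re / P⌋ + 1} : Finset ℤ)
  have hsum : tentPeriodization f P z - f z
      = ∑ c ∈ {⌊z.re / P⌋, ⌊z.re / P⌋ + 1}, tent (z.re / P - c) • (f (z - c * P) - f z) := by
    conv_lhs => rw [tentPeriodization_eq_sum hS, ← one_smul ℝ (f z), ← sum_tent_sub_intCast hS,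
      Finset.sum_smul, ← Finset.sum_sub_distrib]
    simp only [smul_sub]
  rw [hsum, ← one_mul ε, ← sum_tent_sub_intCast hS]
  exact norm_sum_smul_le (fun c _ => tent_nonneg _) fun c _ => hf c

lemma norm_tentPeriodization_sub_tentPeriodization_le {z w : ℂ} {η M : ℝ}
    (hη : ∀ c : ℤ, ‖f (z - c * P) - f (w - c * P)‖ ≤ η) (hM : ∀ c : ℤ, ‖f (w - c * P)‖ ≤ M) :
    ‖tentPeriodization f P z - tentPeriodization f P w‖ ≤ η + 4 * M * (|z.re - w.re| / |P|) := by
  set u := z.re / P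
  set v := w.re / P
  set S : Finset ℤ := {⌊u⌋, ⌊u⌋ + 1, ⌊v⌋, ⌊v⌋ + 1}
  have hSu : {⌊u⌋, ⌊u⌋ + 1} ⊆ S := by simp [S, Finset.insert_subset_iff]
  have hSv : {⌊v⌋, ⌊v⌋ + 1} ⊆ S := by simp [S, Finset.insert_subset_iff]
  have hsplit : tentPeriodization f P z - tentPeriodization f P w
      = ∑ c ∈ S, tent (u - c) • (f (z - c * P) - f (w - c * P))
        + ∑ c ∈ S, (tent (u - c) - tent (v - c)) • f (w - c * P) := by
    rw [tentPeriodization_eq_sum hSu, tentPeriodization_eq_sum hSv, ← Finset.sum_add_distrib,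
      ← Finset.sum_sub_distrib]
    refine Finset.sum_congr rfl fun c _ => ?_
    module
  have huv : |u - v| = |z.re - w.re| / |P| := by rw [← sub_div, abs_div]
  have hweights : ‖∑ c ∈ S, tent (u - c) • (f (z - c * P) - f (w - c * P))‖ ≤ η := by
    rw [← one_mul η, ← sum_tent_sub_intCast hSu]
    exact norm_sum_smul_le (fun c _ => tent_nonneg _) fun c _ => hη c
  have hM₀ : 0 ≤ M := (norm_nonneg _).trans (hM 0)
  have hslopes : ‖∑ c ∈ S, (tent (u - c) - tent (v - c)) • f (w - c * P)‖
      ≤ 4 * M * (|z.re - w.re| / |P|) := by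
    calc _ ≤ ∑ c ∈ S, |u - v| * M := by
          refine norm_sum_le_of_le _ fun c _ => ?_
          rw [norm_smul, Real.norm_eq_abs]
          refine mul_le_mul ?_ (hM c) (norm_nonneg _) (abs_nonneg _)
          simpa using abs_tent_sub_tent_le (u - c) (v - c)
      _ ≤ 4 * (|u - v| * M) := by
          rw [Finset.sum_const, nsmul_eq_mul]
          gcongr
          exact_mod_cast Finset.card_le_four
      _ = 4 * M * (|z.re - w.re| / |P|) := by rw [huv]; ring
  exact hsplit ▸ (norm_add_le _ _).trans (add_le_add hweights hslopes)

theorem equicontinuousAt_tentPeriodization {K : Set ℝ} {z₀ : ℂ} (hK : K ∈ 𝓝 z₀.im)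
    (hbdd : Bornology.IsBounded (f '' (im ⁻¹' K))) (huc : UniformContinuousOn f (im ⁻¹' K))
    {ι : Type*} {p : ι → ℝ} (hp : ∀ i, 1 ≤ p i) :
    EquicontinuousAt (fun i => tentPeriodization f (p i)) z₀ := by
  rw [Metric.equicontinuousAt_iff]
  intro ε hε
  obtain ⟨M, hM, hfM⟩ := hbdd.exists_pos_norm_le
  obtain ⟨r, hr, hball⟩ := Metric.mem_nhds_iff.1 hK
  obtain ⟨δ, hδ, hfδ⟩ := Metric.uniformContinuousOn_iff.1 huc (ε / 2) (half_pos hε)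
  refine ⟨min (min r δ) (ε / (8 * M)), by positivity, fun z hz i => ?_⟩
  have hdist : dist z₀ z < min (min r δ) (ε / (8 * M)) := by rwa [dist_comm]
  simp only [lt_min_iff] at hdist
  have hzK : z.im ∈ K := by
    refine hball ((abs_im_le_norm (z - z₀)).trans_lt ?_)
    rw [← dist_eq_norm, dist_comm]
    exact hdist.1.1
  have hM' : ∀ c : ℤ, ‖f (z - c * p i)‖ ≤ M := fun c => hfM _ ⟨_, by simpa using hzK, rfl⟩
  have hη : ∀ c : ℤ, ‖f (z₀ - c * p i) - f (z - c * p i)‖ ≤ ε / 2 := by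
    refine fun c => le_of_lt (dist_eq_norm (f _) _ ▸ hfδ _ ?_ _ ?_ ?_)
    · simpa using mem_of_mem_nhds hK
    · simpa using hzK
    · simpa using hdist.1.2
  have hre : |z₀.re - z.re| / |p i| ≤ dist z₀ z := by
    refine (div_le_self (abs_nonneg _) ?_).trans ?_
    · rw [abs_of_pos (by linarith [hp i])]; exact hp i
    · rw [dist_eq_norm, ← sub_re]; exact abs_re_le_norm _
  rw [dist_eq_norm]
  refine (norm_tentPeriodization_sub_tentPeriodization_le hη hM').trans_lt ?_
  calc ε / 2 + 4 * M * (|z₀.re - z.re| / |p i|) ≤ ε / 2 + 4 * M * dist z₀ z := by gcongr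
    _ < ε / 2 + 4 * M * (ε / (8 * M)) := by gcongr; exact hdist.2
    _ = ε := by field_simp; ring

end TentPeriodization

section LimitPeriodic

variable {f : ℂ → ℂ}

lemma re_sub_floor_div_mul_mem_Ico {P : ℝ} (hP : 0 < P) (z : ℂ) :
    (z - ⌊z.re / P⌋ * P).re ∈ Ico 0 P := by
  have hre : (z - ⌊z.re / P⌋ * P).re = z.re - ⌊z.re / P⌋ * P := by simp
  exact hre ▸ ⟨Int.sub_floor_div_mul_nonneg z.re hP, Int.sub_floor_div_mul_lt z.re hP⟩

lemma norm_sub_translate_lt {K : Set ℝ} {ε : ℝ} {N : ℕ+}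
    (hN : ∀ z : ℂ, z.im ∈ K → ∀ n : ℤ, ((N : ℕ+) : ℤ) ∣ n → ‖f (z + 2 * π * n) - f z‖ < ε)
    {n : ℕ} (hn : (N : ℕ) ∣ n) {z : ℂ} (hz : z.im ∈ K) (c : ℤ) :
    ‖f z - f (z - c * (2 * π * n : ℝ))‖ < ε := by
  have := hN (z - c * (2 * π * n : ℝ)) (by simpa using hz) (c * n)
    (dvd_mul_of_dvd_right (by exact_mod_cast hn) c)
  have hshift : z - c * (2 * π * n : ℝ) + 2 * π * ((c * n : ℤ) : ℂ) = z := by push_cast; ring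
  rwa [hshift] at this

theorem LimitPeriodicX.isBounded_image_band (hf : Continuous f) (hlp : LimitPeriodicX f)
    {K : Set ℝ} (hK : IsCompact K) : Bornology.IsBounded (f '' (im ⁻¹' K)) := by
  obtain ⟨N, hN⟩ := hlp 1 one_pos K hK
  set P : ℝ := 2 * π * (N : ℕ)
  have hP : 0 < P := by positivity
  obtain ⟨C, hC⟩ := (isCompact_Icc.reProdIm hK).exists_bound_of_continuousOn hf.continuousOn
    (s := Icc 0 P ×ℂ K)
  refine isBounded_iff_forall_norm_le.2 ⟨C + 1, ?_⟩
  rintro _ ⟨z, hz, rfl⟩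
  set z' := z - ⌊z.re / P⌋ * P
  have hz' : z' ∈ Icc 0 P ×ℂ K :=
    ⟨Ico_subset_Icc_self (re_sub_floor_div_mul_mem_Ico hP z), by simpa [z'] using hz⟩
  calc ‖f z‖ ≤ ‖f z'‖ + ‖f z - f z'‖ := norm_le_insert' _ _
    _ ≤ C + 1 := add_le_add (hC z' hz') (norm_sub_translate_lt hN dvd_rfl hz _).le

theorem LimitPeriodicX.uniformContinuousOn_band (hf : Continuous f) (hlp : LimitPeriodicX f)
    {K : Set ℝ} (hK : IsCompact K) : UniformContinuousOn f (im ⁻¹' K) := by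
  rw [Metric.uniformContinuousOn_iff]
  intro ε hε
  obtain ⟨N, hN⟩ := hlp (ε / 3) (by positivity) K hK
  set P : ℝ := 2 * π * (N : ℕ)
  have hP : 0 < P := by positivity
  obtain ⟨δ, hδ, hfδ⟩ := Metric.uniformContinuousOn_iff.1
    ((isCompact_Icc.reProdIm hK).uniformContinuousOn_of_continuous hf.continuousOn
      (s := Icc (-1) (P + 1) ×ℂ K)) (ε / 3) (by positivity)
  refine ⟨min 1 δ, by positivity, fun z hz w hw hzw => ?_⟩
  rw [lt_min_iff] at hzw
  set T : ℂ := ⌊z.re / P⌋ * P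
  have hzT := re_sub_floor_div_mul_mem_Ico hP z
  have hwz : |w.re - z.re| < 1 := by
    rw [← sub_re]
    exact (abs_re_le_norm _).trans_lt (by rw [← dist_eq_norm, dist_comm]; exact hzw.1)
  have hzT' : (z - T).re ∈ Icc (-1) (P + 1) := ⟨by linarith [hzT.1], by linarith [hzT.2]⟩
  have hwT' : (w - T).re ∈ Icc (-1) (P + 1) := by
    have hwT : (w - T).re = (z - T).re + (w.re - z.re) := by simp only [sub_re]; ring
    rw [hwT]
    constructor <;> linarith [hzT.1, hzT.2, abs_lt.1 hwz]
  have hmid : dist (f (z - T)) (f (w - T)) < ε / 3 :=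
    hfδ _ ⟨hzT', by simpa [T] using hz⟩ _ ⟨hwT', by simpa [T] using hw⟩
      (by rw [dist_sub_right]; exact hzw.2)
  calc dist (f z) (f w) ≤ dist (f z) (f (z - T)) + dist (f (z - T)) (f (w - T))
        + dist (f (w - T)) (f w) := dist_triangle4 _ _ _ _
    _ < ε / 3 + ε / 3 + ε / 3 := by
        gcongr
        · rw [dist_eq_norm]; exact norm_sub_translate_lt hN dvd_rfl hz _
        · rw [dist_eq_norm, norm_sub_rev]; exact norm_sub_translate_lt hN dvd_rfl hw _
    _ = ε := by ring

theorem LimitPeriodicX.convBands_tentPeriodization (hlp : LimitPeriodicX f) :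
    ConvBands (fun n : ℕ+ => tentPeriodization f (2 * π * (n : ℕ))) f := by
  intro K hK ε hε
  obtain ⟨N, hN⟩ := hlp (ε / 2) (half_pos hε) K hK
  refine ⟨N, fun n hn z hz => ?_⟩
  rw [norm_sub_rev]
  refine (norm_tentPeriodization_sub_le fun c => ?_).trans_lt (half_lt_self hε)
  rw [norm_sub_rev]
  exact (norm_sub_translate_lt hN hn hz c).le

theorem LimitPeriodicX.equicontinuous_tentPeriodization (hf : Continuous f)
    (hlp : LimitPeriodicX f) :
    Equicontinuous fun n : ℕ+ => tentPeriodization f (2 * π * (n : ℕ)) := by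
  have hperiod (n : ℕ+) : 1 ≤ 2 * π * (n : ℕ) := by
    have : (1 : ℝ) ≤ (n : ℕ) := Nat.one_le_cast.2 n.pos
    nlinarith [pi_gt_three]
  exact fun z₀ => equicontinuousAt_tentPeriodization
    (Icc_mem_nhds (sub_one_lt z₀.im) (lt_add_one z₀.im))
    (hlp.isBounded_image_band hf isCompact_Icc) (hlp.uniformContinuousOn_band hf isCompact_Icc)
    hperiod

end LimitPeriodic

section ConvBands

variable {F : ℕ+ → ℂ → ℂ} {f : ℂ → ℂ}

theorem ConvBands.continuous (hF : ∀ n, Continuous (F n)) (h : ConvBands F f) :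
    Continuous f := by
  refine continuous_of_locally_uniform_approx_of_continuousAt fun z u hu => ?_
  obtain ⟨ε, hε, hεu⟩ := Metric.mem_uniformity_dist.1 hu
  obtain ⟨N, hN⟩ := h (Icc (z.im - 1) (z.im + 1)) isCompact_Icc ε hε
  refine ⟨im ⁻¹' Icc (z.im - 1) (z.im + 1), ?_, F N, (hF N).continuousAt,
    fun y hy => hεu ?_⟩
  · exact continuous_im.continuousAt.preimage_mem_nhds (Icc_mem_nhds (by linarith) (by linarith))
  · rw [dist_eq_norm]
    exact hN N dvd_rfl y hy

theorem ConvBands.limitPeriodicX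
    (hper : ∀ n : ℕ+, ∀ z : ℂ, F n (z + 2 * π * ((n : ℕ+) : ℕ)) = F n z) (h : ConvBands F f) :
    LimitPeriodicX f := by
  intro ε hε K hK
  obtain ⟨N, hN⟩ := h K hK (ε / 2) (half_pos hε)
  refine ⟨N, fun z hz m hm => ?_⟩
  have hFm : F N (z + 2 * π * m) = F N z := by
    obtain ⟨k, rfl⟩ := hm
    have := Function.Periodic.int_mul (hper N) k z
    convert this using 3
    push_cast
    ring
  calc ‖f (z + 2 * π * m) - f z‖
      = ‖(f (z + 2 * π * m) - F N (z + 2 * π * m)) - (f z - F N z)‖ := by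
        rw [hFm, sub_sub_sub_cancel_right]
    _ ≤ ‖f (z + 2 * π * m) - F N (z + 2 * π * m)‖ + ‖f z - F N z‖ := norm_sub_le _ _
    _ < ε / 2 + ε / 2 := add_lt_add (hN N dvd_rfl _ (by simpa using hz)) (hN N dvd_rfl z hz)
    _ = ε := add_halves ε

end ConvBands

/-- A map `f : ℂ → ℂ` is continuous and limit periodic with
respect to `x` iff there is a sequence of continuous `2πn`-periodic maps
converging to `f` uniformly on horizontal bands along the divisibility net;
moreover, the sequence can be chosen equicontinuous. -/
theorem statement6 (f : ℂ → ℂ) :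
    ((Continuous f ∧ LimitPeriodicX f) ↔
      ∃ F : ℕ+ → ℂ → ℂ, (∀ n, Continuous (F n)) ∧
        (∀ n : ℕ+, ∀ z : ℂ, F n (z + 2 * π * ((n : ℕ+) : ℕ)) = F n z) ∧
        ConvBands F f) ∧
    ((Continuous f ∧ LimitPeriodicX f) →
      ∃ F : ℕ+ → ℂ → ℂ, (∀ n, Continuous (F n)) ∧
        (∀ n : ℕ+, ∀ z : ℂ, F n (z + 2 * π * ((n : ℕ+) : ℕ)) = F n z) ∧
        ConvBands F f ∧ Equicontinuous F) := by
  have forward : Continuous f ∧ LimitPeriodicX f →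
      ∃ F : ℕ+ → ℂ → ℂ, (∀ n, Continuous (F n)) ∧
        (∀ n : ℕ+, ∀ z : ℂ, F n (z + 2 * π * ((n : ℕ+) : ℕ)) = F n z) ∧
        ConvBands F f ∧ Equicontinuous F := by
    rintro ⟨hf, hlp⟩
    have hequi := hlp.equicontinuous_tentPeriodization hf
    refine ⟨_, hequi.continuous, fun n z => ?_, hlp.convBands_tentPeriodization, hequi⟩
    simpa using tentPeriodization_add_period (f := f) (P := 2 * π * (n : ℕ)) (by positivity) z
  refine ⟨⟨fun h => ?_, fun ⟨F, hF, hper, hconv⟩ =>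
    ⟨hconv.continuous hF, hconv.limitPeriodicX hper⟩⟩, forward⟩
  obtain ⟨F, hF, hper, hconv, -⟩ := forward h
  exact ⟨F, hF, hper, hconv⟩
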